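/- Let m ≥ 1 and suppose 𝔼[X] = 0 and 𝔼[Z] = 0. Then the Gauss-optimal estimator c₃⁽ʰ'ᴳᵒ⁾ = ( (m+2)·\overline{X²Z} − m·\overline{X²}·Z̄ ) / (m+1) is an unbiased estimator of the third cumulant C₃(x,x,z): 𝔼[c₃⁽ʰ'ᴳᵒ⁾] = 𝔼[X²Z]. -/

import Mathlib

/-!
Expanding the sample means, the estimator equals
`((m + 2) ∑ᵢ Xᵢ²Zᵢ - (∑ᵢ Xᵢ²)(∑ⱼ Zⱼ)) / (m (m + 1))`.
The diagonal sum has expectation `m 𝔼[X²Z]`. In the double sum, each off-diagonal term `Xᵢ²Zⱼ`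
(`i ≠ j`) factors by independence and vanishes because `𝔼[Z] = 0`, so it also has expectation
`m 𝔼[X²Z]`, and the two contributions combine to `𝔼[X²Z]`. Integrability of `X²Z` comes from
Hölder's inequality for three factors in `L³`.
-/

open MeasureTheory ProbabilityTheory

section
variable {Ω : Type*} [MeasurableSpace Ω] {μ : Measure Ω}

lemma MeasureTheory.MemLp.integrable_sq_mul {X Z : Ω → ℝ} (hX : MemLp X 3 μ) (hZ : MemLp Z 3 μ) :
    Integrable (fun ω => X ω ^ 2 * Z ω) μ := by
  have : ENNReal.HolderTriple 3 3 (3 / 2) := ⟨by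
    rw [ENNReal.inv_div (by norm_num) (by norm_num), ENNReal.div_eq_inv_mul, ← two_mul, mul_comm]⟩
  have : ENNReal.HolderTriple (3 / 2) 3 1 := ⟨by
    rw [ENNReal.inv_div (by norm_num) (by norm_num), inv_one, ← one_div, ENNReal.div_add_div_same]
    norm_num
    exact ENNReal.div_self (by norm_num) (by norm_num)⟩
  have hXX : MemLp (fun ω => X ω * X ω) (3 / 2) μ := hX.mul' hX
  simpa [sq, ← memLp_one_iff_integrable] using hZ.mul' hXX

variable {ι : Type*} {A B : ι → Ω → ℝ}

lemma integrable_mul_of_indepFun_of_ne (hA : ∀ i, Integrable (A i) μ)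
    (hB : ∀ j, Integrable (B j) μ) (hAB : ∀ i, Integrable (fun ω => A i ω * B i ω) μ)
    (hindep : ∀ i j, i ≠ j → IndepFun (A i) (B j) μ) (i j : ι) :
    Integrable (fun ω => A i ω * B j ω) μ := by
  rcases eq_or_ne i j with rfl | hij
  · exact hAB i
  · exact (hindep i j hij).integrable_mul (hA i) (hB j)

lemma integrable_sum_mul_sum_of_indepFun [Fintype ι] (hA : ∀ i, Integrable (A i) μ)
    (hB : ∀ j, Integrable (B j) μ) (hAB : ∀ i, Integrable (fun ω => A i ω * B i ω) μ)
    (hindep : ∀ i j, i ≠ j → IndepFun (A i) (B j) μ) :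
    Integrable (fun ω => (∑ i, A i ω) * ∑ j, B j ω) μ := by
  simp_rw [Finset.sum_mul_sum]
  exact integrable_finsetSum _ fun i _ => integrable_finsetSum _ fun j _ =>
    integrable_mul_of_indepFun_of_ne hA hB hAB hindep i j

lemma integral_sum_mul_sum_of_indepFun [Fintype ι] (hA : ∀ i, Integrable (A i) μ)
    (hB : ∀ j, Integrable (B j) μ) (hAB : ∀ i, Integrable (fun ω => A i ω * B i ω) μ)
    (hindep : ∀ i j, i ≠ j → IndepFun (A i) (B j) μ) (hB0 : ∀ j, ∫ ω, B j ω ∂μ = 0) :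
    ∫ ω, (∑ i, A i ω) * (∑ j, B j ω) ∂μ = ∑ i, ∫ ω, A i ω * B i ω ∂μ := by
  have hint := integrable_mul_of_indepFun_of_ne hA hB hAB hindep
  simp_rw [Finset.sum_mul_sum]
  rw [integral_finsetSum _ fun i _ => integrable_finsetSum _ fun j _ => hint i j]
  refine Finset.sum_congr rfl fun i _ => ?_
  rw [integral_finsetSum _ fun j _ => hint i j]
  refine Finset.sum_eq_single i (fun j _ hji => ?_) (by simp)
  rw [(hindep i j hji.symm).integral_fun_mul_eq_mul_integral (hA i).1 (hB j).1, hB0, mul_zero]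

end

theorem unbiased_c3_h_Go {Ω : Type*} [MeasurableSpace Ω] (μ : Measure Ω) [IsProbabilityMeasure μ]
    (m : ℕ) (hm : 1 ≤ m)
    (X Z : Fin m → Ω → ℝ)
    (hindep : iIndepFun (fun i ω => (X i ω, Z i ω)) μ)
    (hident : ∀ i, IdentDistrib (fun ω => (X i ω, Z i ω)) (fun ω => (X ⟨0, by omega⟩ ω, Z ⟨0, by omega⟩ ω)) μ μ)
    (hX : MemLp (X ⟨0, by omega⟩) 3 μ)
    (hZ : MemLp (Z ⟨0, by omega⟩) 3 μ)
    (hEZ : (∫ ω, Z ⟨0, by omega⟩ ω ∂μ) = 0) :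
    (∫ ω, (((m:ℝ)+2) * ((m:ℝ)⁻¹ * ∑ i, (X i ω)^2 * Z i ω) - (m:ℝ) * ((m:ℝ)⁻¹ * ∑ i, (X i ω)^2) * ((m:ℝ)⁻¹ * ∑ i, Z i ω)) / ((m:ℝ)+1) ∂μ) = (∫ ω, (X ⟨0, by omega⟩ ω)^2 * Z ⟨0, by omega⟩ ω ∂μ) := by
  set c := ∫ ω, X ⟨0, by omega⟩ ω ^ 2 * Z ⟨0, by omega⟩ ω ∂μ
  have hXi : ∀ i, MemLp (X i) 3 μ := fun i => ((hident i).comp measurable_fst).memLp_iff.mpr hX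
  have hZi : ∀ i, MemLp (Z i) 3 μ := fun i => ((hident i).comp measurable_snd).memLp_iff.mpr hZ
  have hX2 : ∀ i, Integrable (fun ω => X i ω ^ 2) μ := fun i =>
    ((hXi i).mono_exponent (by norm_num)).integrable_sq
  have hX2Z : ∀ i, Integrable (fun ω => X i ω ^ 2 * Z i ω) μ := fun i =>
    (hXi i).integrable_sq_mul (hZi i)
  have hEX2Z : ∀ i, ∫ ω, X i ω ^ 2 * Z i ω ∂μ = c := fun i =>
    ((hident i).comp ((measurable_fst.pow_const 2).mul measurable_snd)).integral_eq
  have hEZi : ∀ j, ∫ ω, Z j ω ∂μ = 0 := fun j =>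
    ((hident j).comp measurable_snd).integral_eq.trans hEZ
  have hindep_ne : ∀ i j, i ≠ j → IndepFun (fun ω => X i ω ^ 2) (Z j) μ := fun i j hij =>
    (hindep.indepFun hij).comp (measurable_fst.pow_const 2) measurable_snd
  have hZint : ∀ j, Integrable (Z j) μ := fun j => (hZi j).integrable (by norm_num)
  have hdiag : ∫ ω, ∑ i, X i ω ^ 2 * Z i ω ∂μ = m * c := by
    simp [integral_finsetSum _ fun i _ => hX2Z i, hEX2Z]
  have hcross : ∫ ω, (∑ i, X i ω ^ 2) * (∑ j, Z j ω) ∂μ = m * c := by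
    simp [integral_sum_mul_sum_of_indepFun hX2 hZint hX2Z hindep_ne hEZi, hEX2Z]
  calc _ = ∫ ω, ((m + 2) * ∑ i, X i ω ^ 2 * Z i ω - (∑ i, X i ω ^ 2) * (∑ j, Z j ω))
        / (m * (m + 1)) ∂μ := by
        congr 1; funext ω; field_simp
    _ = c := by
      rw [integral_div, integral_sub ((integrable_finsetSum _ fun i _ => hX2Z i).const_mul _)
        (integrable_sum_mul_sum_of_indepFun hX2 hZint hX2Z hindep_ne), integral_const_mul,
        hdiag, hcross]
      field_simp
      ring
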